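/- Let T > 0, A > 0, κ > 0, B ∈ ℝ, α > 0, φ > 0, and let Q̄ ≥ 1 be an integer. Then there exists a unique continuously differentiable function h = (h₀, h₁, …, h_{Q̄}) : [0, T] → ℝ^{Q̄+1} satisfying, for all t ∈ [0, T]: h₀'(t) = 0 with h₀(T) = 0, and for each q ∈ {1, …, Q̄}, h_q'(t) = φ·q² − sup_{δ ≥ B} A·exp(−κ·δ)·(δ + h_{q−1}(t) − h_q(t)) with terminal condition h_q(T) = −α·q². -/

import Mathlib

/-!
The supremum `H(c) = sup_{δ ≥ B} A e^{-κδ} (δ + c)` is a supremum of affine functions of `c` with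
slopes `A e^{-κδ} ≤ A e^{-κB}`, so `H` is globally Lipschitz. The system is triangular: once
`h_{q-1}` is known, `h_q` solves the scalar terminal value problem `y' = φ q² - H(h_{q-1}(t) - y)`,
whose right-hand side is continuous in `t` and globally Lipschitz in `y`. Picard–Lindelöf on
intervals of length at most `1 / (2 Lip)`, glued backwards from `T`, solves it on all of `[0, T]`,
and Grönwall's inequality makes the solution unique. Induction on `q` does the rest.
-/

/-- `h : ℝ → ℕ → ℝ` solves the single-agent (reference model) HJB ODE system on `[0,T]`:
`h₀' = 0` with `h₀(T) = 0`, and for `1 ≤ q ≤ Q̄`,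
`h_q'(t) = φ·q² − sup_{δ ≥ B} A·exp(−κ·δ)·(δ + h_{q−1}(t) − h_q(t))`
with `h_q(T) = −α·q²`. -/
def IsSingleAgentHJBSolution (T A κ B α φ : ℝ) (Qbar : ℕ) (h : ℝ → ℕ → ℝ) : Prop :=
  (∀ t ∈ Set.Icc (0 : ℝ) T, HasDerivWithinAt (fun s => h s 0) 0 (Set.Icc 0 T) t) ∧
  h T 0 = 0 ∧
  ∀ q : ℕ, 1 ≤ q → q ≤ Qbar →
    (∀ t ∈ Set.Icc (0 : ℝ) T,
      HasDerivWithinAt (fun s => h s q)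
        (φ * (q : ℝ) ^ 2 -
          sSup ((fun δ => A * Real.exp (-κ * δ) * (δ + h t (q - 1) - h t q)) '' Set.Ici B))
        (Set.Icc 0 T) t) ∧
    h T q = -α * (q : ℝ) ^ 2

open Set NNReal Real

section TerminalValueProblem

variable {E : Type*} [NormedAddCommGroup E] [NormedSpace ℝ E] {v : ℝ → E → E} {K : ℝ≥0}

theorem exists_hasDerivWithinAt_Icc_of_mul_le_half [CompleteSpace E] {a b : ℝ} (hab : a ≤ b)
    (hv : ∀ t ∈ Icc a b, LipschitzWith K (v t)) (hcont : ∀ x, ContinuousOn (v · x) (Icc a b))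
    (hK : K * (b - a) ≤ 1 / 2) (x₀ : E) :
    ∃ y : ℝ → E, y b = x₀ ∧ ∀ t ∈ Icc a b, HasDerivWithinAt y (v t (y t)) (Icc a b) t := by
  obtain ⟨t₀, -, ht₀⟩ := isCompact_Icc.exists_isMaxOn (nonempty_Icc.mpr hab) (hcont x₀).norm
  set M : ℝ≥0 := ‖v t₀ x₀‖₊
  -- `r` is chosen so that `(M + K r) (b - a) ≤ r`; this is where `K (b - a) ≤ 1 / 2` enters
  set r : ℝ≥0 := 2 * M * ⟨b - a, sub_nonneg.mpr hab⟩
  have hPL : IsPicardLindelof v (tmin := a) (tmax := b) ⟨b, right_mem_Icc.mpr hab⟩ x₀ r 0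
      (M + K * r) K :=
    { lipschitzOnWith := fun t ht => (hv t ht).lipschitzOnWith
      continuousOn := fun x _ => hcont x
      norm_le := fun t ht x hx => by
        calc ‖v t x‖ ≤ ‖v t x₀‖ + ‖v t x - v t x₀‖ := norm_le_norm_add_norm_sub' _ _
          _ ≤ M + K * r := by
            gcongr
            · exact ht₀ ht
            · rw [← dist_eq_norm]
              exact ((hv t ht).dist_le_mul x x₀).trans
                (mul_le_mul_of_nonneg_left (Metric.mem_closedBall.mp hx) K.coe_nonneg)
      mul_max_le := by
        have hr : (r : ℝ) = 2 * M * (b - a) := rfl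
        simp only [sub_self, NNReal.coe_zero, sub_zero, max_eq_right (sub_nonneg.mpr hab),
          NNReal.coe_add, NNReal.coe_mul]
        nlinarith [mul_le_mul_of_nonneg_left hK (by positivity : (0 : ℝ) ≤ r), M.coe_nonneg] }
  exact hPL.exists_eq_forall_mem_Icc_hasDerivWithinAt₀

theorem hasDerivWithinAt_Icc_ite_lt {a b c : ℝ} (hac : a ≤ c) (hcb : c ≤ b) {y₁ y₂ : ℝ → E}
    (hy₁ : ∀ t ∈ Icc a c, HasDerivWithinAt y₁ (v t (y₁ t)) (Icc a c) t)
    (hy₂ : ∀ t ∈ Icc c b, HasDerivWithinAt y₂ (v t (y₂ t)) (Icc c b) t) (hc : y₁ c = y₂ c) :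
    ∀ t ∈ Icc a b, HasDerivWithinAt (fun s => if s < c then y₁ s else y₂ s)
      (v t (if t < c then y₁ t else y₂ t)) (Icc a b) t := by
  set y : ℝ → E := fun s => if s < c then y₁ s else y₂ s
  have hy₁_eq : EqOn y y₁ (Icc a c) := fun s hs => by
    rcases hs.2.lt_or_eq with hlt | rfl
    · exact if_pos hlt
    · exact (if_neg (lt_irrefl s)).trans hc.symm
  have hy₂_eq : EqOn y y₂ (Icc c b) := fun s hs => if_neg hs.1.not_gt
  intro t ht
  have left : HasDerivWithinAt y (v t (y t)) (Icc a c) t := by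
    by_cases htc : t ≤ c
    · rw [hy₁_eq ⟨ht.1, htc⟩]
      exact (hy₁ t ⟨ht.1, htc⟩).congr_of_mem hy₁_eq ⟨ht.1, htc⟩
    · exact HasFDerivWithinAt.of_notMem_closure (by rw [closure_Icc]; exact fun h => htc h.2)
  have right : HasDerivWithinAt y (v t (y t)) (Icc c b) t := by
    by_cases hct : c ≤ t
    · rw [hy₂_eq ⟨hct, ht.2⟩]
      exact (hy₂ t ⟨hct, ht.2⟩).congr_of_mem hy₂_eq ⟨hct, ht.2⟩
    · exact HasFDerivWithinAt.of_notMem_closure (by rw [closure_Icc]; exact fun h => hct h.1)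
  simpa only [Icc_union_Icc_eq_Icc hac hcb] using left.union right

theorem exists_hasDerivWithinAt_Icc_of_sub_le_mul [CompleteSpace E] {ε : ℝ} (hε : 0 ≤ ε)
    (hKε : K * ε ≤ 1 / 2) (n : ℕ) {a b : ℝ} (hab : a ≤ b) (hn : b - a ≤ n * ε)
    (hv : ∀ t ∈ Icc a b, LipschitzWith K (v t)) (hcont : ∀ x, ContinuousOn (v · x) (Icc a b))
    (x₀ : E) :
    ∃ y : ℝ → E, y b = x₀ ∧ ∀ t ∈ Icc a b, HasDerivWithinAt y (v t (y t)) (Icc a b) t := by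
  induction n generalizing a with
  | zero =>
    refine exists_hasDerivWithinAt_Icc_of_mul_le_half hab hv hcont ?_ x₀
    have : b - a ≤ 0 := by simpa using hn
    nlinarith [K.coe_nonneg]
  | succ n ih =>
    by_cases hn' : b - a ≤ n * ε
    · exact ih hab hn' hv hcont
    set m := b - n * ε
    have ham : a ≤ m := by linarith
    have hmb : m ≤ b := sub_le_self b (by positivity)
    obtain ⟨y₂, hy₂b, hy₂⟩ := ih hmb (by simp [m]) (fun t ht => hv t ⟨ham.trans ht.1, ht.2⟩)
      (fun x => (hcont x).mono (Icc_subset_Icc_left ham))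
    obtain ⟨y₁, hy₁m, hy₁⟩ := exists_hasDerivWithinAt_Icc_of_mul_le_half ham
      (fun t ht => hv t ⟨ht.1, ht.2.trans hmb⟩) (fun x => (hcont x).mono (Icc_subset_Icc_right hmb))
      (hKε.trans' (by push_cast at hn; gcongr; linarith)) (y₂ m)
    exact ⟨_, (if_neg hmb.not_gt).trans hy₂b, hasDerivWithinAt_Icc_ite_lt ham hmb hy₁ hy₂ hy₁m⟩

theorem exists_hasDerivWithinAt_Icc_of_lipschitzWith [CompleteSpace E] {a b : ℝ} (hab : a ≤ b)
    (hv : ∀ t ∈ Icc a b, LipschitzWith K (v t)) (hcont : ∀ x, ContinuousOn (v · x) (Icc a b))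
    (x₀ : E) :
    ∃ y : ℝ → E, y b = x₀ ∧ ∀ t ∈ Icc a b, HasDerivWithinAt y (v t (y t)) (Icc a b) t := by
  set ε : ℝ := 1 / (2 * (K + 1))
  have hε : 0 < ε := by positivity
  have hKε : K * ε ≤ 1 / 2 := by
    rw [mul_one_div, div_le_div_iff₀ (by positivity) two_pos]
    linarith
  exact exists_hasDerivWithinAt_Icc_of_sub_le_mul hε.le hKε ⌈(b - a) / ε⌉₊ hab
    ((div_le_iff₀ hε).mp (Nat.le_ceil _)) hv hcont x₀

theorem eqOn_Icc_of_hasDerivWithinAt_of_lipschitzWith {a b : ℝ}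
    (hv : ∀ t ∈ Icc a b, LipschitzWith K (v t)) {f g : ℝ → E}
    (hf : ∀ t ∈ Icc a b, HasDerivWithinAt f (v t (f t)) (Icc a b) t)
    (hg : ∀ t ∈ Icc a b, HasDerivWithinAt g (v t (g t)) (Icc a b) t) (hfg : f b = g b) :
    EqOn f g (Icc a b) := by
  have toIic {y : ℝ → E} (hy : ∀ t ∈ Icc a b, HasDerivWithinAt y (v t (y t)) (Icc a b) t) :
      ∀ t ∈ Ioc a b, HasDerivWithinAt y (v t (y t)) (Iic t) t := fun t ht =>
    (hy t (Ioc_subset_Icc_self ht)).mono_of_mem_nhdsWithin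
      (Filter.mem_of_superset (Icc_mem_nhdsLE ht.1) (Icc_subset_Icc_right ht.2))
  exact ODE_solution_unique_of_mem_Icc_left (s := fun _ => univ)
    (fun t ht => (hv t (Ioc_subset_Icc_self ht)).lipschitzOnWith)
    (fun t ht => (hf t ht).continuousWithinAt) (toIic hf) (fun _ _ => mem_univ _)
    (fun t ht => (hg t ht).continuousWithinAt) (toIic hg) (fun _ _ => mem_univ _) hfg

end TerminalValueProblem

theorem LipschitzWith.csSup_image {α X : Type*} [PseudoMetricSpace X] {s : Set α}
    (hs : s.Nonempty) {f : α → X → ℝ} {K : ℝ≥0} (hf : ∀ i ∈ s, LipschitzWith K (f i))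
    (hbdd : ∀ x, BddAbove ((f · x) '' s)) : LipschitzWith K fun x => sSup ((f · x) '' s) :=
  LipschitzWith.of_le_add_mul K fun x y => csSup_le (hs.image _) <| by
    rintro _ ⟨i, hi, rfl⟩
    exact ((hf i hi).le_add_mul x y).trans
      (add_le_add_left (le_csSup (hbdd y) (mem_image_of_mem _ hi)) _)

noncomputable def hamiltonian (A κ B c : ℝ) : ℝ :=
  sSup ((fun δ => A * exp (-κ * δ) * (δ + c)) '' Ici B)

section Hamiltonian

variable {A κ : ℝ}

theorem bddAbove_image_mul_exp_mul_add (hA : 0 ≤ A) (hκ : 0 < κ) (s : Set ℝ) (c : ℝ) :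
    BddAbove ((fun δ => A * exp (-κ * δ) * (δ + c)) '' s) := by
  refine ⟨A / κ * exp (κ * c - 1), ?_⟩
  rintro _ ⟨δ, -, rfl⟩
  have hlin : κ * (δ + c) ≤ exp (κ * c - 1) * exp (κ * δ) := by
    rw [← exp_add]
    linarith [add_one_le_exp (κ * c - 1 + κ * δ)]
  calc A * exp (-κ * δ) * (δ + c) = A / κ * exp (-κ * δ) * (κ * (δ + c)) := by
        field_simp
    _ ≤ A / κ * exp (-κ * δ) * (exp (κ * c - 1) * exp (κ * δ)) := by gcongr
    _ = A / κ * exp (κ * c - 1) := by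
        have hinv : exp (-κ * δ) * exp (κ * δ) = 1 := by rw [← exp_add]; simp
        linear_combination A / κ * exp (κ * c - 1) * hinv

theorem lipschitzWith_hamiltonian (hA : 0 ≤ A) (hκ : 0 < κ) (B : ℝ) :
    LipschitzWith (A * exp (-κ * B)).toNNReal (hamiltonian A κ B) := by
  refine LipschitzWith.csSup_image nonempty_Ici (fun δ hδ => ?_)
    (bddAbove_image_mul_exp_mul_add hA hκ _)
  refine LipschitzWith.of_le_add_mul' _ fun c c' => ?_
  have hexp : A * exp (-κ * δ) ≤ A * exp (-κ * B) :=
    mul_le_mul_of_nonneg_left (exp_le_exp.mpr (by nlinarith [mem_Ici.mp hδ])) hA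
  calc A * exp (-κ * δ) * (δ + c) = A * exp (-κ * δ) * (δ + c') + A * exp (-κ * δ) * (c - c') := by
        ring
    _ ≤ A * exp (-κ * δ) * (δ + c') + A * exp (-κ * B) * dist c c' := by
        have hdiff : A * exp (-κ * δ) * (c - c') ≤ A * exp (-κ * B) * |c - c'| :=
          (mul_le_mul_of_nonneg_left (le_abs_self _) (by positivity)).trans
            (mul_le_mul_of_nonneg_right hexp (abs_nonneg _))
        rw [Real.dist_eq]
        linarith

theorem sSup_image_add_sub_eq_hamiltonian (A κ B a b : ℝ) :
    sSup ((fun δ => A * exp (-κ * δ) * (δ + a - b)) '' Ici B) = hamiltonian A κ B (a - b) := by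
  simp only [hamiltonian, add_sub_assoc]

theorem lipschitzWith_const_sub_hamiltonian_sub (hA : 0 ≤ A) (hκ : 0 < κ) (B K₀ c : ℝ) :
    LipschitzWith (A * exp (-κ * B)).toNNReal fun x => K₀ - hamiltonian A κ B (c - x) :=
  LipschitzWith.of_dist_le_mul fun x y => by
    rw [dist_sub_left, ← dist_sub_left c x y]
    exact (lipschitzWith_hamiltonian hA hκ B).dist_le_mul _ _

theorem exists_hasDerivWithinAt_const_sub_hamiltonian (hA : 0 ≤ A) (hκ : 0 < κ) (B K₀ : ℝ)
    {a b : ℝ} (hab : a ≤ b) {u : ℝ → ℝ} (hu : ContinuousOn u (Icc a b)) (y_b : ℝ) :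
    ∃ y : ℝ → ℝ, y b = y_b ∧
      ∀ t ∈ Icc a b, HasDerivWithinAt y (K₀ - hamiltonian A κ B (u t - y t)) (Icc a b) t :=
  exists_hasDerivWithinAt_Icc_of_lipschitzWith hab
    (fun t _ => lipschitzWith_const_sub_hamiltonian_sub hA hκ B K₀ (u t))
    (fun _ => continuousOn_const.sub
      ((lipschitzWith_hamiltonian hA hκ B).continuous.comp_continuousOn
        (hu.sub continuousOn_const)))
    y_b

end Hamiltonian

section HJB

variable {T A κ B α φ : ℝ} {Qbar : ℕ}

theorem exists_isSingleAgentHJBSolution (hT : 0 ≤ T) (hA : 0 ≤ A) (hκ : 0 < κ) :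
    ∃ h : ℝ → ℕ → ℝ, IsSingleAgentHJBSolution T A κ B α φ Qbar h := by
  have level (q : ℕ) (u : ℝ → ℝ) (hu : ContinuousOn u (Icc 0 T)) :=
    exists_hasDerivWithinAt_const_sub_hamiltonian hA hκ B (φ * (q : ℝ) ^ 2) hT hu
      (-α * (q : ℝ) ^ 2)
  choose! next hnext_T hnext using level
  let u : ℕ → ℝ → ℝ := fun q => Nat.rec (fun _ => 0) (fun p up => next (p + 1) up) q
  have hu : ∀ q, ContinuousOn (u q) (Icc 0 T) := by
    intro q
    induction q with
    | zero => exact continuousOn_const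
    | succ p ih => exact fun t ht => (hnext (p + 1) (u p) ih t ht).continuousWithinAt
  refine ⟨fun t q => u q t, fun t _ => hasDerivWithinAt_const _ _ _, rfl, fun q hq _ => ?_⟩
  obtain ⟨p, rfl⟩ := Nat.exists_eq_add_of_le' hq
  simp only [sSup_image_add_sub_eq_hamiltonian, Nat.add_sub_cancel]
  exact ⟨hnext (p + 1) (u p) (hu p), hnext_T (p + 1) (u p) (hu p)⟩

theorem IsSingleAgentHJBSolution.eqOn {h₁ h₂ : ℝ → ℕ → ℝ}
    (hs₁ : IsSingleAgentHJBSolution T A κ B α φ Qbar h₁)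
    (hs₂ : IsSingleAgentHJBSolution T A κ B α φ Qbar h₂) (hA : 0 ≤ A) (hκ : 0 < κ) :
    ∀ q ≤ Qbar, EqOn (h₁ · q) (h₂ · q) (Icc 0 T) := by
  intro q
  induction q with
  | zero =>
    exact fun _ => eqOn_Icc_of_hasDerivWithinAt_of_lipschitzWith (v := fun _ _ => 0) (K := 0)
      (fun _ _ => LipschitzWith.const 0) hs₁.1 hs₂.1 (hs₁.2.1.trans hs₂.2.1.symm)
  | succ q ih =>
    intro hq
    obtain ⟨hd₁, hT₁⟩ := hs₁.2.2 (q + 1) (by omega) hq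
    obtain ⟨hd₂, hT₂⟩ := hs₂.2.2 (q + 1) (by omega) hq
    simp only [sSup_image_add_sub_eq_hamiltonian, Nat.add_sub_cancel] at hd₁ hd₂
    refine eqOn_Icc_of_hasDerivWithinAt_of_lipschitzWith
      (fun t _ => lipschitzWith_const_sub_hamiltonian_sub hA hκ B (φ * ((q + 1 : ℕ) : ℝ) ^ 2)
        (h₁ t q)) hd₁ (fun t ht => ?_) (hT₁.trans hT₂.symm)
    simpa only [ih (by omega) ht] using hd₂ t ht

end HJB

theorem singleAgent_HJB_existence_uniqueness_general
    (T A κ B α φ : ℝ) (Qbar : ℕ)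
    (hT : 0 < T) (hA : 0 < A) (hκ : 0 < κ) :
    (∃ h : ℝ → ℕ → ℝ, IsSingleAgentHJBSolution T A κ B α φ Qbar h) ∧
    ∀ h₁ h₂ : ℝ → ℕ → ℝ,
      IsSingleAgentHJBSolution T A κ B α φ Qbar h₁ →
      IsSingleAgentHJBSolution T A κ B α φ Qbar h₂ →
      ∀ t ∈ Set.Icc (0 : ℝ) T, ∀ q ≤ Qbar, h₁ t q = h₂ t q := by
  refine ⟨exists_isSingleAgentHJBSolution hT.le hA.le hκ, fun h₁ h₂ hs₁ hs₂ t ht q hq => ?_⟩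
  exact hs₁.eqOn hs₂ hA.le hκ q hq ht

/-- Existence and uniqueness for the single-agent reference model
HJB ODE system: there is a unique continuously differentiable solution
`h = (h₀, …, h_{Q̄})` on `[0, T]`. -/
theorem singleAgent_HJB_existence_uniqueness
    (T A κ B α φ : ℝ) (Qbar : ℕ)
    (hT : 0 < T) (hA : 0 < A) (hκ : 0 < κ) (hα : 0 < α) (hφ : 0 < φ) (hQ : 1 ≤ Qbar) :
    (∃ h : ℝ → ℕ → ℝ, IsSingleAgentHJBSolution T A κ B α φ Qbar h) ∧
    ∀ h₁ h₂ : ℝ → ℕ → ℝ,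
      IsSingleAgentHJBSolution T A κ B α φ Qbar h₁ →
      IsSingleAgentHJBSolution T A κ B α φ Qbar h₂ →
      ∀ t ∈ Set.Icc (0 : ℝ) T, ∀ q ≤ Qbar, h₁ t q = h₂ t q :=
  singleAgent_HJB_existence_uniqueness_general T A κ B α φ Qbar hT hA hκ
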